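/- If S is a symmetric-matrix-valued polynomial field on ℝ³ of degree at most k+1 with div S = 0 (row-wise divergence), then S = curl curl* T for some symmetric-matrix-valued polynomial field T of degree at most k+3. -/

import Mathlib

open Matrix

noncomputable section

abbrev V3 : Type := Fin 3 → ℝ
abbrev M3 : Type := Matrix (Fin 3) (Fin 3) ℝ

/-- Euclidean dot product on `ℝ³`. -/
def dot3 (a b : V3) : ℝ := ∑ i, a i * b i

/-- Partial derivative in the `i`-th coordinate direction. -/
noncomputable def pd (i : Fin 3) (f : V3 → ℝ) (x : V3) : ℝ := fderiv ℝ f x (Pi.single i 1)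

/-- Gradient of a scalar field. -/
noncomputable def vgrad (f : V3 → ℝ) (x : V3) : V3 := fun i => pd i f x

/-- Curl of a vector field on `ℝ³`. -/
noncomputable def vcurl (v : V3 → V3) (x : V3) : V3 :=
  ![pd 1 (fun y => v y 2) x - pd 2 (fun y => v y 1) x,
    pd 2 (fun y => v y 0) x - pd 0 (fun y => v y 2) x,
    pd 0 (fun y => v y 1) x - pd 1 (fun y => v y 0) x]

/-- Divergence of a vector field on `ℝ³`. -/
noncomputable def vdiv (v : V3 → V3) (x : V3) : ℝ := ∑ i, pd i (fun y => v y i) x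

/-- Row-wise curl of a matrix field. -/
noncomputable def mcurl (T : V3 → M3) (x : V3) : M3 :=
  Matrix.of fun i j => vcurl (fun y => T y i) x j

/-- Row-wise divergence of a matrix field. -/
noncomputable def mdiv (T : V3 → M3) (x : V3) : V3 := fun i => vdiv (fun y => T y i) x

/-- Gradient of a vector field: the rows are the gradients of the components. -/
noncomputable def mgrad (v : V3 → V3) (x : V3) : M3 :=
  Matrix.of fun i j => pd j (fun y => v y i) x

/-- Symmetric gradient (linearized strain) of a vector field. -/
noncomputable def eps (v : V3 → V3) (x : V3) : M3 := (2⁻¹ : ℝ) • (mgrad v x + (mgrad v x)ᵀ)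

/-- Column-wise curl: `curl* T = (curl Tᵀ)ᵀ`. -/
noncomputable def mcurlstar (T : V3 → M3) (x : V3) : M3 := (mcurl (fun y => (T y)ᵀ) x)ᵀ

/-- The second order operator `curl curl*`. -/
noncomputable def ccs (T : V3 → M3) (x : V3) : M3 := mcurl (fun y => mcurlstar T y) x

/-- Axial vector of a (skew-symmetric) matrix. -/
def vect (A : M3) : V3 := ![A 2 1, A 0 2, A 1 0]

/-- Skew-symmetric part of a matrix. -/
def skw (A : M3) : M3 := (2⁻¹ : ℝ) • (A - Aᵀ)

/-- The algebraic operator `Ξ T = Tᵀ - tr(T) I`. -/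
def Xi (A : M3) : M3 := Aᵀ - A.trace • (1 : M3)

/-- `f` is (the restriction of) a polynomial of total degree at most `k`. -/
def IsPolyDeg (k : ℕ) (f : V3 → ℝ) : Prop :=
  ∃ q : MvPolynomial (Fin 3) ℝ, q.totalDegree ≤ k ∧ ∀ x, f x = MvPolynomial.eval x q

/-- Vector-valued polynomial field of degree at most `k`. -/
def IsPolyVDeg (k : ℕ) (v : V3 → V3) : Prop := ∀ i, IsPolyDeg k (fun x => v x i)

/-- Matrix-valued polynomial field of degree at most `k`. -/
def IsPolyMDeg (k : ℕ) (T : V3 → M3) : Prop := ∀ i j, IsPolyDeg k (fun x => T x i j)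

/-! ### Auxiliary development: polynomial elasticity complex on `ℝ³` -/

namespace DivFreeCcs

open MvPolynomial

abbrev PP : Type := MvPolynomial (Fin 3) ℝ
abbrev MM := Fin 3 → Fin 3 → PP

lemma fin3 : ∀ i : Fin 3, i = 0 ∨ i = 1 ∨ i = 2 := by decide

/-! #### The inverse-degree operator `NN` -/

def degF (α : Fin 3 →₀ ℕ) : ℕ := α.sum fun _ n => n

lemma degF_add (α β : Fin 3 →₀ ℕ) : degF (α + β) = degF α + degF β :=
  Finsupp.sum_add_index' (fun _ => rfl) (fun _ _ _ => rfl)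

lemma degF_single (i : Fin 3) : degF (Finsupp.single i 1) = 1 := by
  simp [degF, Finsupp.sum_single_index]

lemma sub_single_add (α : Fin 3 →₀ ℕ) (i : Fin 3) (h : α i ≠ 0) :
    α - Finsupp.single i 1 + Finsupp.single i 1 = α :=
  tsub_add_cancel_of_le (Finsupp.single_le_iff.mpr (Nat.one_le_iff_ne_zero.mpr h))

lemma degF_sub_single (α : Fin 3 →₀ ℕ) (i : Fin 3) (h : α i ≠ 0) :
    degF (α - Finsupp.single i 1) + 1 = degF α := by
  conv_rhs => rw [← sub_single_add α i h]
  rw [degF_add, degF_single]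

lemma degF_eq (α : Fin 3 →₀ ℕ) : (degF α : ℝ) = (α 0 : ℝ) + α 1 + α 2 := by
  rw [degF, Finsupp.sum_fintype _ _ (fun _ => rfl), Fin.sum_univ_three]
  push_cast; ring

/-- The scaled inverse-degree operator: divides the degree-`d` part by `d + c`. -/
noncomputable def NN (c : ℕ) (q : PP) : PP :=
  ∑ α ∈ q.support, monomial α (coeff α q / ((degF α : ℝ) + c))

lemma coeff_NN (c : ℕ) (q : PP) (β : Fin 3 →₀ ℕ) :
    coeff β (NN c q) = coeff β q / ((degF β : ℝ) + c) := by
  classical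
  rw [NN, coeff_sum]
  simp only [coeff_monomial]
  rw [Finset.sum_ite_eq' q.support β (fun α => coeff α q / ((degF α : ℝ) + c))]
  split_ifs with h
  · rfl
  · rw [notMem_support_iff.mp h, zero_div]

lemma NN_monomial (c : ℕ) (α : Fin 3 →₀ ℕ) (a : ℝ) :
    NN c (monomial α a) = monomial α (a / ((degF α : ℝ) + c)) := by
  ext β
  rw [coeff_NN, coeff_monomial, coeff_monomial]
  split_ifs with h
  · subst h; rfl
  · rw [zero_div]

lemma NN_add (c : ℕ) (p q : PP) : NN c (p + q) = NN c p + NN c q := by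
  ext β; simp [coeff_NN, coeff_add, add_div]

lemma NN_neg (c : ℕ) (p : PP) : NN c (-p) = - NN c p := by
  ext β; simp [coeff_NN, neg_div]

lemma NN_totalDegree (c : ℕ) (q : PP) : (NN c q).totalDegree ≤ q.totalDegree := by
  apply Finset.sup_mono
  intro β hβ
  rw [mem_support_iff] at hβ ⊢
  rw [coeff_NN] at hβ
  intro h0
  rw [h0, zero_div] at hβ
  exact hβ rfl

lemma pderiv_NN (c : ℕ) (i : Fin 3) (q : PP) :
    pderiv i (NN c q) = NN (c + 1) (pderiv i q) := by
  induction q using MvPolynomial.induction_on' with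
  | add p q hp hq => rw [NN_add, map_add, map_add, NN_add, hp, hq]
  | monomial α a =>
    rw [NN_monomial, pderiv_monomial, pderiv_monomial, NN_monomial]
    by_cases h : α i = 0
    · simp [h]
    · rw [← degF_sub_single α i h]
      push_cast
      congr 1
      ring

lemma keyN (q : PP) :
    X 0 * NN 3 (pderiv 0 q) + X 1 * NN 3 (pderiv 1 q) + X 2 * NN 3 (pderiv 2 q)
      + NN 2 q + NN 2 q = q := by
  induction q using MvPolynomial.induction_on' with
  | add p q hp hq =>
    simp only [map_add, NN_add, mul_add] at *
    linear_combination hp + hq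
  | monomial α a =>
    have step : ∀ i : Fin 3, X i * NN 3 (pderiv i (monomial α a))
        = monomial α (a * (α i : ℝ) / ((degF α : ℝ) + 2)) := by
      intro i
      rw [pderiv_monomial, NN_monomial]
      by_cases h : α i = 0
      · simp [h]
      · rw [← degF_sub_single α i h]
        push_cast
        rw [X, monomial_mul, one_mul, add_comm (Finsupp.single i 1) _, sub_single_add α i h]
        congr 1
        ring
    rw [step 0, step 1, step 2, NN_monomial]
    have hD : ((degF α : ℝ) + 2) ≠ 0 := by positivity
    rw [← map_add, ← map_add, ← map_add, ← map_add]
    congr 1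
    field_simp
    rw [degF_eq]
    ring

/-! #### Commuting partial derivatives -/

lemma pderiv_comm' (i j : Fin 3) (q : PP) :
    pderiv i (pderiv j q) = pderiv j (pderiv i q) := by
  rcases eq_or_ne i j with rfl | hij
  · rfl
  induction q using MvPolynomial.induction_on' with
  | add p q hp hq => simp only [map_add, hp, hq]
  | monomial α a =>
    rw [pderiv_monomial, pderiv_monomial, pderiv_monomial, pderiv_monomial]
    have h1 : ∀ (k l : Fin 3), k ≠ l → ∀ β : Fin 3 →₀ ℕ,
        ((β - Finsupp.single k 1 : Fin 3 →₀ ℕ)) l = β l := by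
      intro k l hkl β
      rw [Finsupp.tsub_apply, Finsupp.single_apply]
      simp [hkl]
    rw [h1 j i (Ne.symm hij), h1 i j hij]
    have h2 : α - Finsupp.single j 1 - Finsupp.single i 1
        = α - Finsupp.single i 1 - Finsupp.single j 1 := by
      rw [tsub_tsub, tsub_tsub, add_comm]
    rw [h2]
    congr 1
    ring

/-! #### Polynomial curl and the Poincaré homotopy -/

def pcurl (v : Fin 3 → PP) : Fin 3 → PP :=
  ![pderiv 1 (v 2) - pderiv 2 (v 1),
    pderiv 2 (v 0) - pderiv 0 (v 2),
    pderiv 0 (v 1) - pderiv 1 (v 0)]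

noncomputable def pkappa (v : Fin 3 → PP) : Fin 3 → PP :=
  ![NN 2 (v 1) * X 2 - NN 2 (v 2) * X 1,
    NN 2 (v 2) * X 0 - NN 2 (v 0) * X 2,
    NN 2 (v 0) * X 1 - NN 2 (v 1) * X 0]

lemma pcurl_pkappa0 (v : Fin 3 → PP)
    (hv : pderiv 0 (v 0) + pderiv 1 (v 1) + pderiv 2 (v 2) = 0) :
    pcurl (pkappa v) 0 = v 0 := by
  have h : NN 3 (pderiv 1 (v 1)) + NN 3 (pderiv 2 (v 2)) = - NN 3 (pderiv 0 (v 0)) := by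
    have h2 : pderiv 1 (v 1) + pderiv 2 (v 2) = - pderiv 0 (v 0) := by
      linear_combination hv
    rw [← NN_add, h2, NN_neg]
  simp only [pcurl, pkappa, Matrix.cons_val_zero, Matrix.cons_val_one, Matrix.head_cons,
    Matrix.cons_val_two, Matrix.tail_cons]
  rw [map_sub, map_sub, pderiv_mul, pderiv_mul, pderiv_mul, pderiv_mul]
  simp only [pderiv_NN, pderiv_X_self, pderiv_X_of_ne (show (0:Fin 3) ≠ 1 by decide),
    pderiv_X_of_ne (show (0:Fin 3) ≠ 2 by decide), pderiv_X_of_ne (show (1:Fin 3) ≠ 0 by decide),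
    pderiv_X_of_ne (show (1:Fin 3) ≠ 2 by decide), pderiv_X_of_ne (show (2:Fin 3) ≠ 0 by decide),
    pderiv_X_of_ne (show (2:Fin 3) ≠ 1 by decide), mul_one, mul_zero, Nat.reduceAdd]
  linear_combination keyN (v 0) - (X 0 : PP) * h

lemma pcurl_pkappa1 (v : Fin 3 → PP)
    (hv : pderiv 0 (v 0) + pderiv 1 (v 1) + pderiv 2 (v 2) = 0) :
    pcurl (pkappa v) 1 = v 1 := by
  have h : NN 3 (pderiv 2 (v 2)) + NN 3 (pderiv 0 (v 0)) = - NN 3 (pderiv 1 (v 1)) := by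
    have h2 : pderiv 2 (v 2) + pderiv 0 (v 0) = - pderiv 1 (v 1) := by
      linear_combination hv
    rw [← NN_add, h2, NN_neg]
  simp only [pcurl, pkappa, Matrix.cons_val_zero, Matrix.cons_val_one, Matrix.head_cons,
    Matrix.cons_val_two, Matrix.tail_cons]
  rw [map_sub, map_sub, pderiv_mul, pderiv_mul, pderiv_mul, pderiv_mul]
  simp only [pderiv_NN, pderiv_X_self, pderiv_X_of_ne (show (0:Fin 3) ≠ 1 by decide),
    pderiv_X_of_ne (show (0:Fin 3) ≠ 2 by decide), pderiv_X_of_ne (show (1:Fin 3) ≠ 0 by decide),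
    pderiv_X_of_ne (show (1:Fin 3) ≠ 2 by decide), pderiv_X_of_ne (show (2:Fin 3) ≠ 0 by decide),
    pderiv_X_of_ne (show (2:Fin 3) ≠ 1 by decide), mul_one, mul_zero, Nat.reduceAdd]
  linear_combination keyN (v 1) - (X 1 : PP) * h

lemma pcurl_pkappa2 (v : Fin 3 → PP)
    (hv : pderiv 0 (v 0) + pderiv 1 (v 1) + pderiv 2 (v 2) = 0) :
    pcurl (pkappa v) 2 = v 2 := by
  have h : NN 3 (pderiv 0 (v 0)) + NN 3 (pderiv 1 (v 1)) = - NN 3 (pderiv 2 (v 2)) := by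
    have h2 : pderiv 0 (v 0) + pderiv 1 (v 1) = - pderiv 2 (v 2) := by
      linear_combination hv
    rw [← NN_add, h2, NN_neg]
  simp only [pcurl, pkappa, Matrix.cons_val_zero, Matrix.cons_val_one, Matrix.head_cons,
    Matrix.cons_val_two, Matrix.tail_cons]
  rw [map_sub, map_sub, pderiv_mul, pderiv_mul, pderiv_mul, pderiv_mul]
  simp only [pderiv_NN, pderiv_X_self, pderiv_X_of_ne (show (0:Fin 3) ≠ 1 by decide),
    pderiv_X_of_ne (show (0:Fin 3) ≠ 2 by decide), pderiv_X_of_ne (show (1:Fin 3) ≠ 0 by decide),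
    pderiv_X_of_ne (show (1:Fin 3) ≠ 2 by decide), pderiv_X_of_ne (show (2:Fin 3) ≠ 0 by decide),
    pderiv_X_of_ne (show (2:Fin 3) ≠ 1 by decide), mul_one, mul_zero, Nat.reduceAdd]
  linear_combination keyN (v 2) - (X 2 : PP) * h

lemma pcurl_pkappa (v : Fin 3 → PP)
    (hv : pderiv 0 (v 0) + pderiv 1 (v 1) + pderiv 2 (v 2) = 0) (j : Fin 3) :
    pcurl (pkappa v) j = v j := by
  rcases fin3 j with rfl | rfl | rfl
  exacts [pcurl_pkappa0 v hv, pcurl_pkappa1 v hv, pcurl_pkappa2 v hv]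

lemma pkappa_totalDegree (v : Fin 3 → PP) (m : ℕ) (hv : ∀ i, (v i).totalDegree ≤ m)
    (j : Fin 3) : (pkappa v j).totalDegree ≤ m + 1 := by
  have key : ∀ a b : Fin 3, (NN 2 (v a) * X b).totalDegree ≤ m + 1 := by
    intro a b
    refine le_trans (totalDegree_mul _ _) ?_
    have := (NN_totalDegree 2 (v a)).trans (hv a)
    simpa [totalDegree_X] using this
  fin_cases j <;>
    · refine le_trans (totalDegree_sub _ _) ?_
      simp only [max_le_iff]
      exact ⟨key _ _, key _ _⟩

/-! #### Matrix-field operators at the polynomial level -/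

def pmcurl (U : MM) : MM := fun i => pcurl (U i)
def ptr (U : MM) : PP := U 0 0 + U 1 1 + U 2 2
def pXi (U : MM) : MM := fun i j => U j i - if i = j then ptr U else 0
def pXiInv (M : MM) : MM := fun i j => M j i - if i = j then C (2⁻¹:ℝ) * ptr M else 0
def pmcurlstar (U : MM) : MM := fun i j => pcurl (fun b => U b j) i
def pccs (t : MM) : MM := pmcurl (pmcurlstar t)
def G (Y : MM) : MM := pmcurl (pXiInv (pmcurl Y))

lemma hC2 : (C (2⁻¹:ℝ) : PP) * 2 = 1 := by
  rw [show (2:PP) = C 2 from (map_ofNat C 2).symm, ← C_mul]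
  norm_num

lemma pcurl_congr {v w : Fin 3 → PP} (h : ∀ b, v b = w b) (j : Fin 3) :
    pcurl v j = pcurl w j := by rw [show v = w from funext h]

lemma pcurl_add (v w : Fin 3 → PP) (j : Fin 3) :
    pcurl (fun b => v b + w b) j = pcurl v j + pcurl w j := by
  rcases fin3 j with rfl | rfl | rfl <;>
    simp [pcurl, map_add] <;> ring

lemma pcurl_neg (v : Fin 3 → PP) (j : Fin 3) :
    pcurl (fun b => - v b) j = - pcurl v j := by
  rcases fin3 j with rfl | rfl | rfl <;>
    simp [pcurl, map_neg] <;> ring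

lemma pcurl_grad (f : PP) (j : Fin 3) :
    pcurl (fun b => pderiv b f) j = 0 := by
  rcases fin3 j with rfl | rfl | rfl <;>
    simp [pcurl, pderiv_comm' 1 0, pderiv_comm' 2 0, pderiv_comm' 2 1]

lemma pcurl_Cmul (r : ℝ) (v : Fin 3 → PP) (j : Fin 3) :
    pcurl (fun b => C r * v b) j = C r * pcurl v j := by
  rcases fin3 j with rfl | rfl | rfl <;>
    · simp only [pcurl, Matrix.cons_val_zero, Matrix.cons_val_one, Matrix.head_cons,
        Matrix.cons_val_two, Matrix.tail_cons, pderiv_C_mul]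
      ring1

lemma pXiInv_congr {M N : MM} (h : ∀ a b, M a b = N a b) (i j : Fin 3) :
    pXiInv M i j = pXiInv N i j := by
  rw [show M = N from funext fun a => funext (h a)]

lemma pXiInv_add (M N : MM) (i j : Fin 3) :
    pXiInv (fun a b => M a b + N a b) i j = pXiInv M i j + pXiInv N i j := by
  simp only [pXiInv, ptr]
  split_ifs <;> ring

lemma pXiInv_neg (M : MM) (i j : Fin 3) :
    pXiInv (fun a b => - M a b) i j = - pXiInv M i j := by
  simp only [pXiInv, ptr]
  split_ifs <;> ring1

lemma pXiInv_pXi (U : MM) (i j : Fin 3) : pXiInv (pXi U) i j = U i j := by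
  have h2 := hC2
  rcases fin3 i with rfl | rfl | rfl <;> rcases fin3 j with rfl | rfl | rfl <;>
    · simp only [pXiInv, pXi, ptr, reduceIte, (by decide : (0:Fin 3) ≠ 1),
        (by decide : (0:Fin 3) ≠ 2), (by decide : (1:Fin 3) ≠ 0), (by decide : (1:Fin 3) ≠ 2),
        (by decide : (2:Fin 3) ≠ 0), (by decide : (2:Fin 3) ≠ 1), if_neg, if_pos]
      first
      | ring1
      | linear_combination (U 0 0 + U 1 1 + U 2 2) * h2

lemma pmcurl_neg (Y : MM) (a b : Fin 3) :
    pmcurl (fun i j => - Y i j) a b = - pmcurl Y a b := by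
  show pcurl (fun j => - Y a j) b = _
  rw [pcurl_neg]; rfl

lemma pmcurl_add (Y Z : MM) (a b : Fin 3) :
    pmcurl (fun i j => Y i j + Z i j) a b = pmcurl Y a b + pmcurl Z a b := by
  show pcurl (fun j => Y a j + Z a j) b = _
  rw [pcurl_add]; rfl

lemma G_add (Y Z : MM) (i j : Fin 3) :
    G (fun a b => Y a b + Z a b) i j = G Y i j + G Z i j := by
  show pcurl (pXiInv (pmcurl fun a b => Y a b + Z a b) i) j = _
  rw [pcurl_congr (fun b => pXiInv_congr (pmcurl_add Y Z) i b) j,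
    pcurl_congr (fun b => pXiInv_add (pmcurl Y) (pmcurl Z) i b) j, pcurl_add]
  rfl

lemma G_neg (Y : MM) (i j : Fin 3) :
    G (fun a b => - Y a b) i j = - G Y i j := by
  show pcurl (pXiInv (pmcurl fun a b => - Y a b) i) j = _
  rw [pcurl_congr (fun b => pXiInv_congr (pmcurl_neg Y) i b) j,
    pcurl_congr (fun b => pXiInv_neg (pmcurl Y) i b) j, pcurl_neg]
  rfl

/-- axial covector of the skew part of `Y` -/
def pvec (Y : MM) : Fin 3 → PP :=
  ![Y 2 1 - Y 1 2, Y 0 2 - Y 2 0, Y 1 0 - Y 0 1]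

lemma core_skew (Y : MM) (i b : Fin 3) :
    pXiInv (pmcurl (fun a c => Y a c - Y c a)) i b = - pderiv b (pvec Y i) := by
  rcases fin3 i with rfl | rfl | rfl <;> rcases fin3 b with rfl | rfl | rfl <;>
    · simp only [pXiInv, pmcurl, ptr, pvec, pcurl, Matrix.cons_val_zero, Matrix.cons_val_one,
        Matrix.head_cons, Matrix.cons_val_two, Matrix.tail_cons, reduceIte,
        (by decide : (0:Fin 3) ≠ 1), (by decide : (0:Fin 3) ≠ 2), (by decide : (1:Fin 3) ≠ 0),
        (by decide : (1:Fin 3) ≠ 2), (by decide : (2:Fin 3) ≠ 0), (by decide : (2:Fin 3) ≠ 1),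
        if_neg, if_pos, map_sub, map_add]
      first
      | ring1
      | linear_combination (- pderiv 0 (Y 2 1) + pderiv 0 (Y 1 2) - pderiv 1 (Y 0 2)
          + pderiv 1 (Y 2 0) - pderiv 2 (Y 1 0) + pderiv 2 (Y 0 1)) * hC2

lemma G_skew (Y : MM) (i j : Fin 3) :
    G (fun a c => Y a c - Y c a) i j = 0 := by
  show pcurl (pXiInv (pmcurl fun a c => Y a c - Y c a) i) j = 0
  rw [pcurl_congr (core_skew Y i) j,
    pcurl_neg (fun b => pderiv b (pvec Y i)) j, pcurl_grad, neg_zero]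

lemma L2 (t : MM) (ht : ∀ i j, t j i = t i j) (i j : Fin 3) :
    pXiInv (pmcurl t) i j = pmcurlstar t i j := by
  rcases fin3 i with rfl | rfl | rfl <;> rcases fin3 j with rfl | rfl | rfl <;>
    · simp only [pXiInv, pmcurl, pmcurlstar, ptr, pcurl, Matrix.cons_val_zero, Matrix.cons_val_one,
        Matrix.head_cons, Matrix.cons_val_two, Matrix.tail_cons, reduceIte,
        (by decide : (0:Fin 3) ≠ 1), (by decide : (0:Fin 3) ≠ 2), (by decide : (1:Fin 3) ≠ 0),
        (by decide : (1:Fin 3) ≠ 2), (by decide : (2:Fin 3) ≠ 0), (by decide : (2:Fin 3) ≠ 1),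
        if_neg, if_pos, ht 0 1, ht 0 2, ht 1 2]
      ring1

lemma divXi (U q : MM) (hq : ∀ i j, pmcurl U i j = q i j) (hsymq : ∀ i j, q j i = q i j)
    (k : Fin 3) :
    pderiv 0 (pXi U k 0) + pderiv 1 (pXi U k 1) + pderiv 2 (pXi U k 2) = 0 := by
  have e01 := hq 0 1; have e02 := hq 0 2; have e10 := hq 1 0
  have e12 := hq 1 2; have e20 := hq 2 0; have e21 := hq 2 1
  simp only [pmcurl, pcurl, Matrix.cons_val_zero, Matrix.cons_val_one, Matrix.head_cons,
    Matrix.cons_val_two, Matrix.tail_cons] at e01 e02 e10 e12 e20 e21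
  rcases fin3 k with rfl | rfl | rfl <;>
    · simp only [pXi, ptr, reduceIte, (by decide : (0:Fin 3) ≠ 1), (by decide : (0:Fin 3) ≠ 2),
        (by decide : (1:Fin 3) ≠ 0), (by decide : (1:Fin 3) ≠ 2), (by decide : (2:Fin 3) ≠ 0),
        (by decide : (2:Fin 3) ≠ 1), if_neg, if_pos, map_sub, map_add, sub_zero]
      first
      | linear_combination e21 - e12 + hsymq 1 2
      | linear_combination e21 - e12 - hsymq 1 2
      | linear_combination e12 - e21 + hsymq 1 2
      | linear_combination e02 - e20 + hsymq 0 2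
      | linear_combination e02 - e20 - hsymq 0 2
      | linear_combination e20 - e02 + hsymq 0 2
      | linear_combination e10 - e01 + hsymq 0 1

lemma GW (U q W : MM) (hq : ∀ i j, pmcurl U i j = q i j)
    (hW : ∀ i j, pmcurl W i j = pXi U i j) (i j : Fin 3) : G W i j = q i j := by
  have h1 : ∀ b, pXiInv (pmcurl W) i b = U i b := fun b => by
    rw [pXiInv_congr hW i b, pXiInv_pXi]
  show pcurl (pXiInv (pmcurl W) i) j = q i j
  rw [pcurl_congr h1 j]
  exact hq i j

lemma pccs_eq_G (t : MM) (ht : ∀ i j, t j i = t i j) (i j : Fin 3) :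
    pccs t i j = G t i j := by
  show pcurl (pmcurlstar t i) j = pcurl (pXiInv (pmcurl t) i) j
  exact (pcurl_congr (fun b => L2 t ht i b) j).symm

lemma main_id (U q W : MM) (hq : ∀ i j, pmcurl U i j = q i j)
    (hW : ∀ i j, pmcurl W i j = pXi U i j) (i j : Fin 3) :
    pccs (fun a b => W a b + W b a) i j = q i j + q i j := by
  have ht : ∀ a b : Fin 3, W b a + W a b = W a b + W b a := fun a b => add_comm _ _
  rw [pccs_eq_G _ ht i j]
  have e1 : G (fun a b => W a b + W b a) i j
      = G (fun a b => W a b + W a b) i j + G (fun a b => - (W a b - W b a)) i j := by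
    rw [show (fun a b => W a b + W b a) = fun a b => (W a b + W a b) + - (W a b - W b a)
      from funext fun a => funext fun b => by ring]
    exact G_add _ _ i j
  rw [e1, G_add W W i j, G_neg (fun a b => W a b - W b a) i j, G_skew, neg_zero, add_zero,
    GW U q W hq hW i j]

lemma pccs_Cmul (r : ℝ) (t : MM) (i j : Fin 3) :
    pccs (fun a b => C r * t a b) i j = C r * pccs t i j := by
  show pcurl (pmcurlstar (fun a b => C r * t a b) i) j = _
  have h1 : ∀ b, pmcurlstar (fun a c => C r * t a c) i b = C r * pmcurlstar t i b := by
    intro b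
    show pcurl (fun c => C r * t c b) i = _
    rw [pcurl_Cmul]
    rfl
  rw [pcurl_congr h1 j, pcurl_Cmul]
  rfl

lemma pXi_totalDegree (U : MM) (m : ℕ) (hU : ∀ i j, (U i j).totalDegree ≤ m) (i j : Fin 3) :
    (pXi U i j).totalDegree ≤ m := by
  have htr : (ptr U).totalDegree ≤ m :=
    le_trans (totalDegree_add _ _) (by
      simp only [max_le_iff]
      exact ⟨le_trans (totalDegree_add _ _) (by simp [max_le_iff, hU 0 0, hU 1 1]), hU 2 2⟩)
  by_cases h : i = j <;>
    · simp only [pXi, h, if_true, if_false, reduceIte]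
      first
      | (refine le_trans (totalDegree_sub _ _) ?_
         simp only [max_le_iff]
         exact ⟨hU _ _, htr⟩)
      | simpa using hU j i

/-! #### The polynomial-level master theorem -/

theorem poly_master (k : ℕ) (q : MM) (hdeg : ∀ i j, (q i j).totalDegree ≤ k + 1)
    (hsymq : ∀ i j, q j i = q i j)
    (hdivq : ∀ i, pderiv 0 (q i 0) + pderiv 1 (q i 1) + pderiv 2 (q i 2) = 0) :
    ∃ t : MM, (∀ i j, (t i j).totalDegree ≤ k + 3) ∧ (∀ i j, t j i = t i j) ∧
      ∀ i j, pccs t i j = q i j := by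
  set U : MM := fun i => pkappa (q i) with hUdef
  have hq : ∀ i j, pmcurl U i j = q i j := fun i j => pcurl_pkappa (q i) (hdivq i) j
  have hUdeg : ∀ i j, (U i j).totalDegree ≤ k + 2 := fun i j =>
    pkappa_totalDegree (q i) (k + 1) (fun b => hdeg i b) j
  set W : MM := fun i => pkappa (fun j => pXi U i j) with hWdef
  have hW : ∀ i j, pmcurl W i j = pXi U i j := fun i j =>
    pcurl_pkappa (fun j => pXi U i j) (divXi U q hq hsymq i) j
  have hWdeg : ∀ i j, (W i j).totalDegree ≤ k + 3 := fun i j =>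
    pkappa_totalDegree _ (k + 2) (fun b => pXi_totalDegree U (k + 2) hUdeg i b) j
  refine ⟨fun a b => C (2⁻¹:ℝ) * (W a b + W b a), fun i j => ?_, fun i j => by ring, fun i j => ?_⟩
  · refine le_trans (totalDegree_mul _ _) ?_
    simp only [totalDegree_C, zero_add]
    refine le_trans (totalDegree_add _ _) ?_
    simp only [max_le_iff]
    exact ⟨hWdeg i j, hWdeg j i⟩
  · rw [pccs_Cmul, main_id U q W hq hW i j]
    linear_combination (q i j) * hC2

/-! #### Bridging polynomial evaluation and `fderiv` -/

/-- total derivative of a polynomial function -/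
noncomputable def DD (q : PP) (x : V3) : V3 →L[ℝ] ℝ :=
  eval x (pderiv 0 q) • ContinuousLinearMap.proj 0
    + eval x (pderiv 1 q) • ContinuousLinearMap.proj 1
    + eval x (pderiv 2 q) • ContinuousLinearMap.proj 2

lemma eval_hasFDerivAt (q : PP) (x : V3) :
    HasFDerivAt (fun y : V3 => eval y q) (DD q x) x := by
  induction q using MvPolynomial.induction_on generalizing x with
  | C a =>
    have : DD (C a) x = 0 := by
      simp [DD, pderiv_C]
    rw [this]
    simp only [eval_C]
    exact hasFDerivAt_const a x
  | add p r hp hr =>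
    have : DD (p + r) x = DD p x + DD r x := by
      simp only [DD, map_add, eval_add]
      module
    rw [this]
    simp only [eval_add]
    exact (hp x).add (hr x)
  | mul_X p n hp =>
    have hX : HasFDerivAt (fun y : V3 => y n) (ContinuousLinearMap.proj n : V3 →L[ℝ] ℝ) x := by
      have h := (ContinuousLinearMap.proj n : V3 →L[ℝ] ℝ).hasFDerivAt (x := x)
      exact h
    have h := (hp x).mul hX
    have e : DD (p * X n) x
        = eval x p • (ContinuousLinearMap.proj n : V3 →L[ℝ] ℝ) + x n • DD p x := by
      simp only [DD, pderiv_mul, pderiv_X, eval_add, eval_mul, eval_X]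
      rcases fin3 n with rfl | rfl | rfl <;>
        · simp [Pi.single_apply]
          module
    rw [e]
    simp only [eval_mul, eval_X]
    exact h

lemma pd_eval (q : PP) (i : Fin 3) (x : V3) :
    pd i (fun y => eval y q) x = eval x (pderiv i q) := by
  have h := (eval_hasFDerivAt q x).fderiv
  rw [pd, h]
  rcases fin3 i with rfl | rfl | rfl <;>
    · simp [DD, Pi.single_apply]

lemma vcurl_eval (p : Fin 3 → PP) (w : V3 → V3) (hw : ∀ y b, w y b = eval y (p b))
    (y : V3) (i : Fin 3) : vcurl w y i = eval y (pcurl p i) := by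
  have e : ∀ b, (fun z => w z b) = fun z => eval z (p b) := fun b => funext fun z => hw z b
  rcases fin3 i with rfl | rfl | rfl <;>
    · simp only [vcurl, pcurl, Matrix.cons_val_zero, Matrix.cons_val_one, Matrix.head_cons,
        Matrix.cons_val_two, Matrix.tail_cons, e 0, e 1, e 2, pd_eval, map_sub]

lemma mcurlstar_eval (t : MM) (T : V3 → M3) (hT : ∀ y a b, T y a b = eval y (t a b))
    (y : V3) (i b : Fin 3) : mcurlstar T y i b = eval y (pmcurlstar t i b) := by
  show (mcurl (fun z => (T z)ᵀ) y)ᵀ i b = _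
  rw [Matrix.transpose_apply]
  show vcurl (fun z => (T z)ᵀ b) y i = _
  exact vcurl_eval (fun c => t c b) _ (fun z c => hT z c b) y i

lemma ccs_eval (t : MM) (T : V3 → M3) (hT : ∀ y a b, T y a b = eval y (t a b))
    (x : V3) (i j : Fin 3) : ccs T x i j = eval x (pccs t i j) := by
  show vcurl (fun y => mcurlstar T y i) x j = _
  exact vcurl_eval (fun b => pmcurlstar t i b) _ (fun y b => mcurlstar_eval t T hT y i b) x j

end DivFreeCcs

open DivFreeCcs MvPolynomial in
/-- a divergence-free symmetric polynomial matrix field of degree ≤ k+1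
equals `curl curl* T` for a symmetric polynomial matrix field `T` of degree ≤ k+3. -/
theorem divfree_eq_ccs (k : ℕ) (S : V3 → M3)
    (hdeg : IsPolyMDeg (k + 1) S) (hsym : ∀ x, (S x)ᵀ = S x)
    (hdiv : ∀ x, mdiv S x = 0) :
    ∃ T : V3 → M3, IsPolyMDeg (k + 3) T ∧ (∀ x, (T x)ᵀ = T x) ∧ ∀ x, ccs T x = S x := by
  choose qq hspec using hdeg
  have hdq : ∀ i j, (qq i j).totalDegree ≤ k + 1 := fun i j => (hspec i j).1
  have heval : ∀ i j x, S x i j = eval x (qq i j) := fun i j x => (hspec i j).2 x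
  have hsymq : ∀ i j, qq j i = qq i j := by
    intro i j
    apply MvPolynomial.funext
    intro x
    rw [← heval j i x, ← heval i j x]
    have h := congrFun (congrFun (hsym x) i) j
    rwa [Matrix.transpose_apply] at h
  have hdivq : ∀ i, pderiv 0 (qq i 0) + pderiv 1 (qq i 1) + pderiv 2 (qq i 2) = 0 := by
    intro i
    apply MvPolynomial.funext
    intro x
    have h0 := congrFun (hdiv x) i
    have e : ∀ j : Fin 3, (fun y : V3 => S y i j) = fun y => eval y (qq i j) := fun j =>
      funext fun y => heval i j y
    simp only [mdiv, vdiv, Fin.sum_univ_three, Pi.zero_apply] at h0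
    rw [e 0, e 1, e 2] at h0
    rw [pd_eval, pd_eval, pd_eval] at h0
    simp only [map_add, map_zero]
    rw [h0]
  obtain ⟨t, hts, htsym, htc⟩ := poly_master k qq hdq hsymq hdivq
  refine ⟨fun x => Matrix.of fun i j => eval x (t i j), fun i j => ⟨t i j, hts i j, fun x => rfl⟩,
    fun x => ?_, fun x => ?_⟩
  · ext i j
    rw [Matrix.transpose_apply]
    show eval x (t j i) = eval x (t i j)
    rw [htsym i j]
  · ext i j
    rw [ccs_eval t (fun x => Matrix.of fun i j => eval x (t i j)) (fun y a b => rfl) x i j,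
      htc i j, ← heval i j x]
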